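/- Let A be a real m×n matrix with m ≤ n and rank(A) = m, and let u ∈ ℝⁿ be a unit vector. Set Ā = A·(I - u·uᵀ) and G = Ā·Āᵀ. Then G is invertible if and only if u does not belong to the row space of A (the span of the rows of A, equivalently the range of the linear map y ↦ Aᵀ·y). -/

import Mathlib

open scoped RealInnerProductSpace
open Matrix

/-! `G = Ā Āᵀ` is invertible iff `Āᵀ = (I - u uᵀ) Aᵀ` is injective. Full row rank makes `Aᵀ`
injective, and `I - u uᵀ` has kernel `ℝ u` because `‖u‖ = 1`, so `Āᵀ` is injective iff the range
of `Aᵀ`, the row space of `A`, meets `ℝ u` only in `0`, i.e. does not contain `u`. -/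

theorem LinearMap.ker_comp_eq_bot_iff_disjoint {R M N P : Type*} [Ring R]
    [AddCommGroup M] [AddCommGroup N] [AddCommGroup P] [Module R M] [Module R N] [Module R P]
    {f : M →ₗ[R] N} (g : N →ₗ[R] P) (hf : LinearMap.ker f = ⊥) :
    LinearMap.ker (g ∘ₗ f) = ⊥ ↔ Disjoint (LinearMap.range f) (LinearMap.ker g) := by
  rw [LinearMap.ker_eq_bot'] at hf ⊢
  rw [LinearMap.disjoint_ker]
  constructor
  · rintro h _ ⟨x, rfl⟩ hx
    rw [h x hx, map_zero]
  · intro h x hx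
    exact hf x (h (f x) ⟨x, rfl⟩ hx)

namespace Matrix

variable {m n K : Type*}

theorem ker_mulVecLin_eq_bot_of_rank_eq [Fintype n] [Field K] (M : Matrix m n K)
    (h : M.rank = Fintype.card n) : LinearMap.ker M.mulVecLin = ⊥ := by
  have := LinearMap.finrank_range_add_finrank_ker M.mulVecLin
  rw [← rank, h, Module.finrank_fintype_fun_eq_card] at this
  exact Submodule.finrank_eq_zero.mp (by omega)

theorem isUnit_mul_transpose_iff [Fintype m] [Fintype n] [DecidableEq m] [Field K]
    [LinearOrder K] [IsStrictOrderedRing K] (B : Matrix m n K) :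
    IsUnit (B * Bᵀ) ↔ LinearMap.ker Bᵀ.mulVecLin = ⊥ := by
  rw [← mulVec_injective_iff_isUnit, ← ker_mulVecLin_transpose_mul_self, transpose_transpose,
    LinearMap.ker_eq_bot]
  rfl

theorem mulVec_one_sub_vecMulVec_self [Fintype n] [CommRing K] [DecidableEq n] (u w : n → K) :
    (1 - vecMulVec u u) *ᵥ w = w - (u ⬝ᵥ w) • u := by
  rw [sub_mulVec, one_mulVec, vecMulVec_mulVec, op_smul_eq_smul]

theorem transpose_one_sub_vecMulVec_self [CommRing K] [DecidableEq n] (u : n → K) :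
    (1 - vecMulVec u u)ᵀ = 1 - vecMulVec u u := by
  rw [transpose_sub, transpose_one, transpose_vecMulVec]

theorem ker_one_sub_vecMulVec_self [Fintype n] [CommRing K] [DecidableEq n] {u : n → K}
    (hu : u ⬝ᵥ u = 1) : LinearMap.ker (1 - vecMulVec u u).mulVecLin = K ∙ u := by
  ext w
  rw [LinearMap.mem_ker, mulVecLin_apply, mulVec_one_sub_vecMulVec_self, sub_eq_zero,
    Submodule.mem_span_singleton]
  constructor
  · intro h
    exact ⟨u ⬝ᵥ w, h.symm⟩
  · rintro ⟨c, rfl⟩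
    rw [dotProduct_smul, hu, smul_eq_mul, mul_one]

theorem mem_span_range_toLp_iff [Fintype m] [CommRing K] (p : ENNReal) (A : Matrix m n K)
    (u : WithLp p (n → K)) :
    u ∈ Submodule.span K (Set.range fun i => WithLp.toLp p (A i)) ↔
      WithLp.ofLp u ∈ LinearMap.range Aᵀ.mulVecLin := by
  have hrange : Set.range (fun i => WithLp.toLp p (A i)) =
      ((WithLp.linearEquiv p K (n → K)).symm : (n → K) →ₗ[K] WithLp p (n → K)) ''
        Set.range A.row := by
    rw [← Set.range_comp]
    rfl
  rw [hrange, Submodule.span_image, Submodule.mem_map_equiv, LinearEquiv.symm_symm,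
    range_mulVecLin, col_transpose]
  rfl

end Matrix

theorem EuclideanSpace.dotProduct_ofLp_self {n : Type*} [Fintype n] (u : EuclideanSpace ℝ n) :
    WithLp.ofLp u ⬝ᵥ WithLp.ofLp u = ‖u‖ ^ 2 := by
  rw [← real_inner_self_eq_norm_sq, EuclideanSpace.inner_eq_star_dotProduct, star_trivial]

theorem rank_one_modified_gram_invertible_iff {m n : ℕ}
    (A : Matrix (Fin m) (Fin n) ℝ) (hrank : A.rank = m)
    (u : EuclideanSpace ℝ (Fin n)) (hu : ‖u‖ = 1)
    (Abar : Matrix (Fin m) (Fin n) ℝ) (hAbar : Abar = A * (1 - vecMulVec u u))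
    (G : Matrix (Fin m) (Fin m) ℝ) (hG : G = Abar * Abarᵀ) :
    IsUnit G ↔
      u ∉ Submodule.span ℝ (Set.range fun i : Fin m => (WithLp.toLp 2 (A i) : EuclideanSpace ℝ (Fin n))) := by
  subst hAbar hG
  have hunit : WithLp.ofLp u ⬝ᵥ WithLp.ofLp u = 1 := by
    rw [EuclideanSpace.dotProduct_ofLp_self, hu, one_pow]
  have hne : WithLp.ofLp u ≠ 0 := fun h => by simp [h] at hunit
  have hinj : LinearMap.ker Aᵀ.mulVecLin = ⊥ :=
    Aᵀ.ker_mulVecLin_eq_bot_of_rank_eq (by rw [rank_transpose, hrank, Fintype.card_fin])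
  rw [isUnit_mul_transpose_iff, transpose_mul, transpose_one_sub_vecMulVec_self, mulVecLin_mul,
    LinearMap.ker_comp_eq_bot_iff_disjoint _ hinj, ker_one_sub_vecMulVec_self hunit,
    Submodule.disjoint_span_singleton' hne, mem_span_range_toLp_iff]
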